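/- For every k ∈ ℂ, every pair of column vectors y, ỹ ∈ ℂ², and each ε ∈ {+1,−1}: P_ε·{ (2·a₁₁^{−ε}·c₁₁^{ε} − b₁₁^{−ε}·b₁₁^{ε})·I + [2(k²+conj(k)²)·conj(b₁₁^{−ε}) − 4·conj(k)·conj(c₁₁^{−ε})]·|y⟩⟨y| }·P_ε = 4k²·σ₂·P_{−ε}·(b₁₁^{ε}·|y⟩⟨y|)·P_{−ε}·σ₂, where P_ε = (I+εσ₃)/2. -/

import Mathlib

/-! For `ε = ±1`, `P_ε` is the orthogonal projection onto a coordinate axis, hence of rank one, so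
`P_ε A P_ε = tr (P_ε A) • P_ε` for every `2 × 2` matrix `A`; and conjugation by `σ₂` exchanges `P_ε` and
`P_{-ε}`. Both sides are therefore scalar multiples of `P_ε`. Since `⟨y|(I ± εσ₃)|y⟩` are real, the
conjugations act on `k` alone, and comparing the scalars leaves a polynomial identity in `k`, `conj k`
and these two numbers. -/

open Matrix Complex ComplexConjugate

noncomputable section

abbrev M2 := Matrix (Fin 2) (Fin 2) ℂ
abbrev Vec2 := Matrix (Fin 2) (Fin 1) ℂ

def sigma3 : M2 := !![1, 0; 0, -1]
def sigma2 : M2 := !![0, -Complex.I; Complex.I, 0]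

/-- ⟨u|M|v⟩ = u†Mv -/
def qform (u : Vec2) (M : M2) (v : Vec2) : ℂ := (uᴴ * M * v) 0 0

def a11 (k : ℂ) (y : Vec2) (ε : ℂ) : ℂ :=
  k * qform y (1 + ε • sigma3) y + conj k * qform y (1 - ε • sigma3) y

def a12 (k : ℂ) (y yt : Vec2) (ε : ℂ) : ℂ :=
  k * qform y (1 + ε • sigma3) yt + conj k * qform y (1 - ε • sigma3) yt

def a21 (k : ℂ) (y yt : Vec2) (ε : ℂ) : ℂ :=
  k * qform yt (1 + ε • sigma3) y + conj k * qform yt (1 - ε • sigma3) y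

def a22 (k : ℂ) (yt : Vec2) (ε : ℂ) : ℂ :=
  k * qform yt (1 + ε • sigma3) yt + conj k * qform yt (1 - ε • sigma3) yt

def b11 (k : ℂ) (y : Vec2) (ε : ℂ) : ℂ :=
  (k ^ 2 + (conj k) ^ 2) * qform y (1 + ε • sigma3) y
    + 2 * k * conj k * qform y (1 - ε • sigma3) y

def b12 (k : ℂ) (y yt : Vec2) (ε : ℂ) : ℂ :=
  (k ^ 2 + (conj k) ^ 2) * qform y (1 + ε • sigma3) yt
    + 2 * k * conj k * qform y (1 - ε • sigma3) yt

def b21 (k : ℂ) (y yt : Vec2) (ε : ℂ) : ℂ :=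
  (k ^ 2 + (conj k) ^ 2) * qform yt (1 + ε • sigma3) y
    + 2 * k * conj k * qform yt (1 - ε • sigma3) y

def c11 (k : ℂ) (y : Vec2) (ε : ℂ) : ℂ :=
  (k ^ 3 + 3 * k * (conj k) ^ 2) * qform y (1 + ε • sigma3) y
    + ((conj k) ^ 3 + 3 * conj k * k ^ 2) * qform y (1 - ε • sigma3) y

def Δf (k : ℂ) (y yt : Vec2) (ε : ℂ) : ℂ :=
  (k ^ 2 - (conj k) ^ 2) ^ 2
      * (a21 k y yt ε * a12 k y yt ε - a11 k y ε * a22 k yt ε)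
    + 2 * a11 k y ε * c11 k y (-ε) - b11 k y ε * b11 k y (-ε)
    + (k ^ 2 - (conj k) ^ 2)
      * (a21 k y yt ε * b11 k y (-ε) - a12 k y yt ε * b11 k y ε
          + a11 k y ε * (b12 k y yt ε - b21 k y yt (-ε)))

/-- P_ε = (I+εσ₃)/2 -/
def Pe (ε : ℂ) : M2 := (1 / 2 : ℂ) • (1 + ε • sigma3)

lemma sigma3_isHermitian : sigma3.IsHermitian := by
  ext i j; fin_cases i <;> fin_cases j <;> simp [sigma3]

lemma Pe_eq (ε : ℂ) : Pe ε = !![(1 + ε) / 2, 0; 0, (1 - ε) / 2] := by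
  ext i j; fin_cases i <;> fin_cases j <;> simp [Pe, sigma3] <;> ring

lemma trace_Pe (ε : ℂ) : trace (Pe ε) = 1 := by
  simp [Pe_eq, trace_fin_two]; ring

lemma sigma2_mul_Pe_mul_sigma2 (ε : ℂ) : sigma2 * Pe ε * sigma2 = Pe (-ε) := by
  simp only [sigma2, Pe_eq, mul_fin_two]
  ext i j; fin_cases i <;> fin_cases j <;> simp <;> ring_nf <;> simp only [I_sq] <;> ring

lemma Pe_mul_mul_Pe {ε : ℂ} (hε : ε ^ 2 = 1) (A : M2) :
    Pe ε * A * Pe ε = trace (Pe ε * A) • Pe ε := by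
  rw [Pe_eq, eta_fin_two A]
  ext i j
  fin_cases i <;> fin_cases j <;>
    simp only [mul_fin_two, trace_fin_two, smul_of, of_apply, Fin.zero_eta, Fin.mk_one, cons_val',
      cons_val_zero, cons_val_one, cons_val_fin_one, smul_cons, smul_eq_mul, smul_empty]
  · linear_combination (A 1 1 / 4) * hε
  · linear_combination (-A 0 1 / 4) * hε
  · linear_combination (-A 1 0 / 4) * hε
  · linear_combination (A 0 0 / 4) * hε

lemma sigma2_mul_Pe_mul_mul_Pe_mul_sigma2 {ε : ℂ} (hε : ε ^ 2 = 1) (A : M2) :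
    sigma2 * Pe ε * A * Pe ε * sigma2 = trace (Pe ε * A) • Pe (-ε) := by
  calc sigma2 * Pe ε * A * Pe ε * sigma2 = sigma2 * (Pe ε * A * Pe ε) * sigma2 := by
        simp only [Matrix.mul_assoc]
    _ = trace (Pe ε * A) • Pe (-ε) := by
        rw [Pe_mul_mul_Pe hε, Matrix.mul_smul, Matrix.smul_mul, sigma2_mul_Pe_mul_sigma2]

lemma trace_mul_mul_conjTranspose (M : M2) (u v : Vec2) : trace (M * v * uᴴ) = qform u M v := by
  rw [trace_mul_comm, trace_fin_one, qform, Matrix.mul_assoc]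

lemma conj_qform_self {M : M2} (hM : M.IsHermitian) (y : Vec2) :
    conj (qform y M y) = qform y M y :=
  (isHermitian_conjTranspose_mul_mul y hM).apply 0 0

lemma qform_smul (u v : Vec2) (c : ℂ) (M : M2) : qform u (c • M) v = c * qform u M v := by
  rw [qform, qform, Matrix.mul_smul, Matrix.smul_mul, Matrix.smul_apply, smul_eq_mul]

lemma lemma2_third_coefficients (k : ℂ) (y : Vec2) {ε : ℂ} (hε : IsSelfAdjoint ε) :
    (2 * a11 k y (-ε) * c11 k y ε - b11 k y (-ε) * b11 k y ε)
        + (2 * (k ^ 2 + (conj k) ^ 2) * conj (b11 k y (-ε))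
            - 4 * conj k * conj (c11 k y (-ε))) * qform y (Pe ε) y
      = 4 * k ^ 2 * (b11 k y ε * qform y (Pe (-ε)) y) := by
  have hplus := conj_qform_self (isHermitian_one.add (sigma3_isHermitian.smul hε)) y
  have hminus := conj_qform_self (isHermitian_one.sub (sigma3_isHermitian.smul hε)) y
  simp only [a11, b11, c11, Pe, qform_smul, neg_smul, ← sub_eq_add_neg, sub_neg_eq_add, map_add,
    map_mul, map_pow, map_ofNat, hplus, hminus, conj_conj]
  ring

theorem lemma2_third_general (k : ℂ) (y : Vec2) (ε : ℂ) (hε : ε = 1 ∨ ε = -1) :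
    Pe ε * ((2 * a11 k y (-ε) * c11 k y ε - b11 k y (-ε) * b11 k y ε) • (1 : M2)
        + (2 * (k ^ 2 + (conj k) ^ 2) * conj (b11 k y (-ε))
            - 4 * conj k * conj (c11 k y (-ε))) • (y * yᴴ)) * Pe ε
      = (4 * k ^ 2) • (sigma2 * Pe (-ε) * (b11 k y ε • (y * yᴴ)) * Pe (-ε) * sigma2) := by
  have hsq : ε ^ 2 = 1 := by rcases hε with rfl | rfl <;> norm_num
  have hsa : IsSelfAdjoint ε := by
    rcases hε with rfl | rfl
    exacts [.one _, (IsSelfAdjoint.one _).neg]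
  rw [Pe_mul_mul_Pe hsq, sigma2_mul_Pe_mul_mul_Pe_mul_sigma2 (by rwa [neg_sq]), neg_neg, smul_smul]
  congr 1
  simp only [Matrix.mul_add, Matrix.mul_smul, trace_add, trace_smul, trace_Pe,
    ← Matrix.mul_assoc, trace_mul_mul_conjTranspose, smul_eq_mul, mul_one]
  exact lemma2_third_coefficients k y hsa

theorem lemma2_third (k : ℂ) (y yt : Vec2) (ε : ℂ) (hε : ε = 1 ∨ ε = -1) :
    Pe ε * ((2 * a11 k y (-ε) * c11 k y ε - b11 k y (-ε) * b11 k y ε) • (1 : M2)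
        + (2 * (k ^ 2 + (conj k) ^ 2) * conj (b11 k y (-ε))
            - 4 * conj k * conj (c11 k y (-ε))) • (y * yᴴ)) * Pe ε
      = (4 * k ^ 2) • (sigma2 * Pe (-ε) * (b11 k y ε • (y * yᴴ)) * Pe (-ε) * sigma2) :=
  lemma2_third_general k y ε hε
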